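/- arXiv:1602.04589 — 2 statements merged into one kernel-verified Lean document; each statement's English description precedes it below -/
import Mathlib

section
/- Let 0 < μ_b ≤ μ_a < μ_1 < 1. Then for every x ≥ 0, g_a(x) ≤ g_b(x), where g_c(x) = kl(μ_1, m_c(x)) + x·kl(μ_c, m_c(x)) and m_c(x) = (μ_1 + x·μ_c)/(1+x). Consequently, for every y in the common domain [0, kl(μ_1,μ_a)) of the inverse functions, g_a^{-1}(y) ≥ g_b^{-1}(y). -/
/-- Bernoulli Kullback–Leibler divergence. -/
noncomputable def kl (x y : ℝ) : ℝ :=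
  x * Real.log (x / y) + (1 - x) * Real.log ((1 - x) / (1 - y))

/-- The weighted mean `m_c(x) = (μ₁ + x μ_c)/(1+x)`. -/
noncomputable def marm (μ1 μc x : ℝ) : ℝ := (μ1 + x * μc) / (1 + x)

/-- The function `g_c(x) = kl(μ₁, m_c(x)) + x·kl(μ_c, m_c(x))`. -/
noncomputable def garm (μ1 μc x : ℝ) : ℝ :=
  kl μ1 (marm μ1 μc x) + x * kl μc (marm μ1 μc x)

/-!
Write `H` for the binary entropy. Up to `-H(p)`, `kl(p, q)` is affine in `p`, so the relation
`μ₁ + x c = (1 + x) m_c(x)` gives `g_c(x) = -H(μ₁) - x H(c) + (1 + x) H(m_c(x))` and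
`kl(μ₁, q) + x kl(c, q) = g_c(x) + (1 + x) kl(m_c(x), q)`.

Since `m_a(x) - m_b(x) = x (a - b) / (1 + x)`, the first identity turns `g_a(x) ≤ g_b(x)` into a
comparison of the secant slopes of the concave `H` over `[b, a]` and over `[m_b(x), m_a(x)]`,
an interval lying further right. The second identity makes `g_c(x)` the minimum over `q` of
`kl(μ₁, q) + x kl(c, q)`, so `g_b` is strictly increasing; then `x_a < x_b` would give
`g_b(x_a) < g_b(x_b) = g_a(x_a) ≤ g_b(x_a)`.
-/

open Real Set

theorem ConcaveOn.slope_le_slope_of_le {𝕜 : Type*} [Field 𝕜] [LinearOrder 𝕜]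
    [IsStrictOrderedRing 𝕜] {s : Set 𝕜} {f : 𝕜 → 𝕜} (hf : ConcaveOn 𝕜 s f) {x y x' y' : 𝕜}
    (hx : x ∈ s) (hy : y ∈ s) (hx' : x' ∈ s) (hy' : y' ∈ s) (hxy : x < y) (hxy' : x' < y')
    (hxx' : x ≤ x') (hyy' : y ≤ y') : slope f x' y' ≤ slope f x y :=
  calc slope f x' y' = slope f y' x' := slope_comm f x' y'
    _ ≤ slope f y' x := hf.slope_anti hy' ⟨hx, (hxy.trans_le hyy').ne⟩ ⟨hx', hxy'.ne⟩ hxx'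
    _ = slope f x y' := slope_comm f y' x
    _ ≤ slope f x y := hf.slope_anti hx ⟨hy, hxy.ne'⟩ ⟨hy', (hxy.trans_le hyy').ne'⟩ hyy'

lemma sub_lt_mul_log_div {p q : ℝ} (hp : 0 < p) (hq : 0 < q) (hpq : p ≠ q) :
    p - q < p * log (p / q) := by
  have hlog : log (q / p) < q / p - 1 :=
    log_lt_sub_one_of_pos (div_pos hq hp) (by rwa [ne_eq, div_eq_one_iff_eq hp.ne', eq_comm])
  have : p * (q / p - 1) = q - p := by field_simp
  rw [← inv_div, log_inv]
  nlinarith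

lemma kl_self (p : ℝ) : kl p p = 0 := by
  rcases eq_or_ne p 0 with rfl | hp0
  · simp [kl]
  rcases eq_or_ne p 1 with rfl | hp1
  · simp [kl]
  simp [kl, div_self hp0, div_self (sub_ne_zero.2 (Ne.symm hp1))]

lemma kl_pos {p q : ℝ} (hp0 : 0 < p) (hp1 : p < 1) (hq0 : 0 < q) (hq1 : q < 1) (hpq : p ≠ q) :
    0 < kl p q := by
  have h := sub_lt_mul_log_div hp0 hq0 hpq
  have h' := sub_lt_mul_log_div (sub_pos.2 hp1) (sub_pos.2 hq1) (by contrapose! hpq; linarith)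
  unfold kl
  linarith

lemma kl_nonneg {p q : ℝ} (hp0 : 0 < p) (hp1 : p < 1) (hq0 : 0 < q) (hq1 : q < 1) :
    0 ≤ kl p q := by
  rcases eq_or_ne p q with rfl | hpq
  · exact (kl_self p).ge
  · exact (kl_pos hp0 hp1 hq0 hq1 hpq).le

lemma kl_eq_neg_binEntropy_sub {p q : ℝ} (hp0 : 0 < p) (hp1 : p < 1) (hq0 : 0 < q)
    (hq1 : q < 1) : kl p q = -binEntropy p - (p * log q + (1 - p) * log (1 - q)) := by
  rw [kl, binEntropy, log_div hp0.ne' hq0.ne', log_div (sub_pos.2 hp1).ne' (sub_pos.2 hq1).ne',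
    log_inv, log_inv]
  ring

lemma one_add_mul_marm (μ1 c : ℝ) {x : ℝ} (hx : 0 ≤ x) : (1 + x) * marm μ1 c x = μ1 + x * c := by
  rw [marm]
  field_simp

lemma marm_mem_Ioo {μ1 c x : ℝ} (hμ0 : 0 < μ1) (hμ1 : μ1 < 1) (hc0 : 0 < c) (hc1 : c < 1)
    (hx : 0 ≤ x) : marm μ1 c x ∈ Ioo 0 1 := by
  rw [marm, mem_Ioo, lt_div_iff₀ (by linarith), div_lt_iff₀ (by linarith)]
  constructor <;> nlinarith

lemma lt_marm {μ1 c x : ℝ} (hc : c < μ1) (hx : 0 ≤ x) : c < marm μ1 c x := by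
  rw [marm, lt_div_iff₀ (by linarith)]
  linarith

lemma kl_add_mul_kl {μ1 c x q : ℝ} (hμ0 : 0 < μ1) (hμ1 : μ1 < 1) (hc0 : 0 < c) (hc1 : c < 1)
    (hx : 0 ≤ x) (hq0 : 0 < q) (hq1 : q < 1) :
    kl μ1 q + x * kl c q = -binEntropy μ1 - x * binEntropy c
      + (1 + x) * (binEntropy (marm μ1 c x) + kl (marm μ1 c x) q) := by
  obtain ⟨hm0, hm1⟩ := marm_mem_Ioo hμ0 hμ1 hc0 hc1 hx
  rw [kl_eq_neg_binEntropy_sub hμ0 hμ1 hq0 hq1, kl_eq_neg_binEntropy_sub hc0 hc1 hq0 hq1,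
    kl_eq_neg_binEntropy_sub hm0 hm1 hq0 hq1]
  linear_combination (log q - log (1 - q)) * one_add_mul_marm μ1 c hx

lemma garm_eq_binEntropy {μ1 c x : ℝ} (hμ0 : 0 < μ1) (hμ1 : μ1 < 1) (hc0 : 0 < c) (hc1 : c < 1)
    (hx : 0 ≤ x) : garm μ1 c x =
      -binEntropy μ1 - x * binEntropy c + (1 + x) * binEntropy (marm μ1 c x) := by
  obtain ⟨hm0, hm1⟩ := marm_mem_Ioo hμ0 hμ1 hc0 hc1 hx
  simpa [kl_self, garm] using kl_add_mul_kl hμ0 hμ1 hc0 hc1 hx hm0 hm1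

lemma garm_le_kl_add_mul_kl {μ1 c x q : ℝ} (hμ0 : 0 < μ1) (hμ1 : μ1 < 1) (hc0 : 0 < c)
    (hc1 : c < 1) (hx : 0 ≤ x) (hq0 : 0 < q) (hq1 : q < 1) :
    garm μ1 c x ≤ kl μ1 q + x * kl c q := by
  obtain ⟨hm0, hm1⟩ := marm_mem_Ioo hμ0 hμ1 hc0 hc1 hx
  rw [kl_add_mul_kl hμ0 hμ1 hc0 hc1 hx hq0 hq1, garm_eq_binEntropy hμ0 hμ1 hc0 hc1 hx]
  nlinarith [kl_nonneg hm0 hm1 hq0 hq1]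

lemma garm_strictMonoOn {μ1 c : ℝ} (hc0 : 0 < c) (hcμ : c < μ1) (hμ1 : μ1 < 1) :
    StrictMonoOn (garm μ1 c) (Ici 0) := by
  intro x hx x' hx' hxx'
  obtain ⟨hm0, hm1⟩ := marm_mem_Ioo (hc0.trans hcμ) hμ1 hc0 (hcμ.trans hμ1) hx'
  have hkl := kl_pos hc0 (hcμ.trans hμ1) hm0 hm1 (lt_marm hcμ hx').ne
  calc garm μ1 c x
      ≤ kl μ1 (marm μ1 c x') + x * kl c (marm μ1 c x') :=
        garm_le_kl_add_mul_kl (hc0.trans hcμ) hμ1 hc0 (hcμ.trans hμ1) hx hm0 hm1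
    _ < kl μ1 (marm μ1 c x') + x' * kl c (marm μ1 c x') := by gcongr
    _ = garm μ1 c x' := rfl

lemma garm_antitoneOn {μ1 x : ℝ} (hμ1 : μ1 < 1) (hx : 0 ≤ x) :
    AntitoneOn (fun c ↦ garm μ1 c x) (Ioo 0 μ1) := by
  intro b ⟨hb0, hbμ⟩ a ⟨ha0, haμ⟩ hba
  rcases hx.eq_or_lt with rfl | hx0
  · simp [garm, marm]
  rcases hba.eq_or_lt with rfl | hba
  · rfl
  have hμ0 := hb0.trans hbμ
  obtain ⟨hma0, hma1⟩ := marm_mem_Ioo hμ0 hμ1 ha0 (haμ.trans hμ1) hx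
  obtain ⟨hmb0, hmb1⟩ := marm_mem_Ioo hμ0 hμ1 hb0 (hbμ.trans hμ1) hx
  have hgap : (1 + x) * (marm μ1 a x - marm μ1 b x) = x * (a - b) := by
    linear_combination one_add_mul_marm μ1 a hx - one_add_mul_marm μ1 b hx
  have hmba : marm μ1 b x < marm μ1 a x := by nlinarith
  have hslope := strictConcave_binEntropy.concaveOn.slope_le_slope_of_le
    ⟨hb0.le, (hbμ.trans hμ1).le⟩ ⟨ha0.le, (haμ.trans hμ1).le⟩ ⟨hmb0.le, hmb1.le⟩ ⟨hma0.le, hma1.le⟩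
    hba hmba (lt_marm hbμ hx).le (lt_marm haμ hx).le
  rw [slope_def_field, slope_def_field, div_le_iff₀ (sub_pos.2 hmba)] at hslope
  have hsec : (binEntropy a - binEntropy b) / (a - b) * ((1 + x) * (marm μ1 a x - marm μ1 b x))
      = x * (binEntropy a - binEntropy b) := by
    rw [hgap]
    field_simp [(sub_pos.2 hba).ne']
  simp only [garm_eq_binEntropy hμ0 hμ1 ha0 (haμ.trans hμ1) hx,
    garm_eq_binEntropy hμ0 hμ1 hb0 (hbμ.trans hμ1) hx]
  linarith [mul_le_mul_of_nonneg_left hslope (by positivity : (0 : ℝ) ≤ 1 + x)]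

/-- if `μ_b ≤ μ_a < μ₁` then `g_a ≤ g_b` pointwise on `[0,∞)`, and
consequently the inverse functions satisfy `g_a⁻¹(y) ≥ g_b⁻¹(y)` on the common domain
`[0, kl(μ₁,μ_a))` (stated via arbitrary preimages `xa, xb ≥ 0` of `y`). -/
theorem garm_comparison (μ1 μa μb : ℝ)
    (h0 : 0 < μb) (hba : μb ≤ μa) (ha1 : μa < μ1) (h1 : μ1 < 1) :
    (∀ x : ℝ, 0 ≤ x → garm μ1 μa x ≤ garm μ1 μb x) ∧
    ∀ y ∈ Set.Ico 0 (kl μ1 μa), ∀ xa xb : ℝ, 0 ≤ xa → 0 ≤ xb →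
      garm μ1 μa xa = y → garm μ1 μb xb = y → xb ≤ xa := by
  have hb1 : μb < μ1 := hba.trans_lt ha1
  have hle : ∀ x : ℝ, 0 ≤ x → garm μ1 μa x ≤ garm μ1 μb x := fun x hx ↦
    garm_antitoneOn h1 hx ⟨h0, hb1⟩ ⟨h0.trans_le hba, ha1⟩ hba
  refine ⟨hle, fun y _ xa xb hxa hxb hya hyb ↦ ?_⟩
  by_contra! hlt
  have := garm_strictMonoOn h0 hb1 h1 (mem_Ici.2 hxa) (mem_Ici.2 hxb) hlt
  linarith [hle xa hxa]
end

section
/- Let n ≥ 1 be an integer. For x ∈ {0,1}^n with s = Σ_{k=1}^n x_k ones, define kt(x) = ∫_0^1 u^s·(1−u)^{n−s} / (π·√(u(1−u))) du. Then: (i) Σ_{x ∈ {0,1}^n} kt(x) = 1, i.e. kt is a probability distribution on {0,1}^n; and (ii) for every x ∈ {0,1}^n and every u ∈ [0,1], u^s·(1−u)^{n−s} ≤ 2·√n · kt(x), i.e. sup_x sup_u p_u(x)/kt(x) ≤ 2√n, where p_u(x) = u^s(1−u)^{n−s} is the Bernoulli likelihood. -/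
/-!
Against the arcsine density, `kt x` is a Beta integral:
`kt x = B(s + ½, n - s + ½) / π = Γ(s + ½) Γ(n - s + ½) / (π n!)`.
Summing the likelihoods over all words gives `(u + (1 - u))ⁿ = 1`, so (i) reduces to `B(½, ½) = π`.

For (ii), `t ≤ e^(t - 1)` applied to `n u / s` and `n (1 - u) / (n - s)` bounds the likelihood by
`sˢ (n - s)^(n - s) / nⁿ`. The estimate `√π m! ≤ 2 √m Γ(m + ½)` (induction, using
`√(m (m + 1)) ≤ m + ½`) and Stirling's bounds `√(2πm) (m/e)ᵐ ≤ m! ≤ e √m (m/e)ᵐ` then reduce the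
claim to the numerical inequality `e ≤ π`.
-/

/-- Number of ones in a binary word `x ∈ {0,1}^n`. -/
def ones {n : ℕ} (x : Fin n → Bool) : ℕ :=
  (Finset.univ.filter (fun k => x k = true)).card

/-- The Krichevsky–Trofimov mixture: the Bernoulli likelihood `u^s (1−u)^{n−s}`
integrated against the Beta(1/2,1/2) prior `1/(π√(u(1−u)))` on `(0,1)`. -/
noncomputable def kt {n : ℕ} (x : Fin n → Bool) : ℝ :=
  ∫ u in (0 : ℝ)..1,
    u ^ ones x * (1 - u) ^ (n - ones x) / (Real.pi * Real.sqrt (u * (1 - u)))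

open Real MeasureTheory ProbabilityTheory Finset
open scoped Nat

theorem prod_ite_eq_pow_ones {R : Type*} [CommMonoid R] {n : ℕ} (x : Fin n → Bool) (u v : R) :
    ∏ k, (if x k then u else v) = u ^ ones x * v ^ (n - ones x) := by
  rw [prod_ite, prod_const, prod_const, ones, filter_not, card_sdiff_of_subset (filter_subset _ _),
    card_univ, Fintype.card_fin]

theorem ones_le {n : ℕ} (x : Fin n → Bool) : ones x ≤ n :=
  (card_filter_le _ _).trans_eq (card_fin n)

theorem sum_pow_ones_mul_pow_eq_one (n : ℕ) (u : ℝ) :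
    ∑ x : Fin n → Bool, u ^ ones x * (1 - u) ^ (n - ones x) = 1 := by
  simp_rw [← prod_ite_eq_pow_ones, ← Fintype.sum_pow (fun b : Bool => if b then u else 1 - u)]
  simp

theorem integral_rpow_mul_one_sub_rpow_eq_beta {p q : ℝ} (hp : 0 < p) (hq : 0 < q) :
    ∫ x in (0 : ℝ)..1, x ^ (p - 1) * (1 - x) ^ (q - 1) = beta p q := by
  rw [beta_eq_betaIntegralReal p q hp hq, ← Complex.ofReal_re (∫ x in (0 : ℝ)..1, _),
    ← intervalIntegral.integral_ofReal, Complex.betaIntegral]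
  congr 1
  refine intervalIntegral.integral_congr fun x hx => ?_
  rw [Set.uIcc_of_le zero_le_one] at hx
  push_cast
  rw [Complex.ofReal_cpow hx.1, Complex.ofReal_cpow (sub_nonneg.2 hx.2)]
  push_cast
  rfl

theorem pow_mul_pow_div_arcsine_eq (a b : ℕ) {u : ℝ} (h0 : 0 < u) (h1 : u < 1) :
    u ^ a * (1 - u) ^ b / (π * √(u * (1 - u)))
      = π⁻¹ * (u ^ ((a + 1 / 2 : ℝ) - 1) * (1 - u) ^ ((b + 1 / 2 : ℝ) - 1)) := by
  have h1' : 0 < 1 - u := sub_pos.2 h1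
  rw [show (a + 1 / 2 : ℝ) - 1 = a - 1 / 2 by ring, show (b + 1 / 2 : ℝ) - 1 = b - 1 / 2 by ring,
    rpow_sub h0, rpow_sub h1', rpow_natCast, rpow_natCast, sqrt_mul h0.le, sqrt_eq_rpow,
    sqrt_eq_rpow]
  field_simp

/-- The KT probability `B(a + ½, b + ½) / π` of any word with `a` ones and `b` zeros. -/
noncomputable def ktWeight (a b : ℕ) : ℝ :=
  Gamma (a + 1 / 2) * Gamma (b + 1 / 2) / (π * (a + b)!)

theorem ktWeight_pos (a b : ℕ) : 0 < ktWeight a b := by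
  unfold ktWeight
  have := pi_pos
  have := Gamma_pos_of_pos (by positivity : (0 : ℝ) < a + 1 / 2)
  have := Gamma_pos_of_pos (by positivity : (0 : ℝ) < b + 1 / 2)
  positivity

theorem integral_pow_mul_pow_div_arcsine (a b : ℕ) :
    ∫ u in (0 : ℝ)..1, u ^ a * (1 - u) ^ b / (π * √(u * (1 - u))) = ktWeight a b := by
  rw [intervalIntegral.integral_of_le zero_le_one, integral_Ioc_eq_integral_Ioo,
    setIntegral_congr_fun measurableSet_Ioo fun u hu => pow_mul_pow_div_arcsine_eq a b hu.1 hu.2,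
    ← integral_Ioc_eq_integral_Ioo, ← intervalIntegral.integral_of_le zero_le_one,
    intervalIntegral.integral_const_mul,
    integral_rpow_mul_one_sub_rpow_eq_beta (by positivity) (by positivity), beta,
    show (a + 1 / 2 : ℝ) + (b + 1 / 2) = (a + b : ℕ) + 1 by push_cast; ring,
    Gamma_nat_eq_factorial, ktWeight]
  field_simp

theorem kt_eq_ktWeight {n : ℕ} (x : Fin n → Bool) : kt x = ktWeight (ones x) (n - ones x) :=
  integral_pow_mul_pow_div_arcsine _ _

theorem ktWeight_zero_zero : ktWeight 0 0 = 1 := by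
  rw [ktWeight, Nat.cast_zero, zero_add, Gamma_one_half_eq, mul_self_sqrt pi_pos.le]
  simp [pi_ne_zero]

theorem ktWeight_comm (a b : ℕ) : ktWeight a b = ktWeight b a := by
  rw [ktWeight, ktWeight, mul_comm (Gamma _), add_comm a]

theorem intervalIntegrable_pow_mul_pow_div_arcsine (a b : ℕ) :
    IntervalIntegrable (fun u : ℝ => u ^ a * (1 - u) ^ b / (π * √(u * (1 - u)))) volume 0 1 :=
  intervalIntegral.intervalIntegrable_of_integral_ne_zero <| by
    rw [integral_pow_mul_pow_div_arcsine]; exact (ktWeight_pos a b).ne'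

theorem sum_kt (n : ℕ) : ∑ x : Fin n → Bool, kt x = 1 := by
  unfold kt
  rw [← intervalIntegral.integral_finsetSum fun x _ =>
    intervalIntegrable_pow_mul_pow_div_arcsine (ones x) (n - ones x)]
  simp_rw [← Finset.sum_div, sum_pow_ones_mul_pow_eq_one]
  simpa [ktWeight_zero_zero] using integral_pow_mul_pow_div_arcsine 0 0

theorem pow_le_pow_mul_exp_sub (a : ℕ) {t : ℝ} (ht : 0 ≤ t) : t ^ a ≤ a ^ a * exp (t - a) := by
  rcases Nat.eq_zero_or_pos a with rfl | ha
  · simpa using one_le_exp ht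
  have ha' : (0 : ℝ) < a := Nat.cast_pos.2 ha
  calc t ^ a = a ^ a * (t / a) ^ a := by rw [div_pow, mul_div_cancel₀ _ (by positivity)]
    _ ≤ a ^ a * exp (t / a - 1) ^ a := by
        gcongr
        linarith [add_one_le_exp (t / a - 1)]
    _ = a ^ a * exp (t - a) := by
        rw [← exp_nat_mul, mul_sub, mul_div_cancel₀ _ ha'.ne', mul_one]

theorem pow_mul_one_sub_pow_le (a b : ℕ) {u : ℝ} (h0 : 0 ≤ u) (h1 : u ≤ 1) :
    ((a : ℝ) + b) ^ (a + b) * (u ^ a * (1 - u) ^ b) ≤ a ^ a * b ^ b := by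
  calc ((a : ℝ) + b) ^ (a + b) * (u ^ a * (1 - u) ^ b)
        = ((a + b) * u) ^ a * ((a + b) * (1 - u)) ^ b := by rw [mul_pow, mul_pow, pow_add]; ring
    _ ≤ (a ^ a * exp ((a + b) * u - a)) * (b ^ b * exp ((a + b) * (1 - u) - b)) := by
        gcongr
        · exact pow_le_pow_mul_exp_sub a (by positivity)
        · exact pow_le_pow_mul_exp_sub b (mul_nonneg (by positivity) (sub_nonneg.2 h1))
    _ = a ^ a * b ^ b := by
        rw [mul_mul_mul_comm, ← exp_add]
        ring_nf
        simp

theorem sqrt_pi_mul_factorial_le_two_sqrt_mul_Gamma_add_half {m : ℕ} (hm : m ≠ 0) :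
    √π * m ! ≤ 2 * √m * Gamma (m + 1 / 2) := by
  induction m, Nat.one_le_iff_ne_zero.2 hm using Nat.le_induction with
  | base =>
    rw [show ((1 : ℕ) : ℝ) + 1 / 2 = 1 / 2 + 1 by norm_num, Gamma_add_one (by norm_num),
      Gamma_one_half_eq]
    simp
  | succ m hm1 ih =>
    have hm0 : (0 : ℝ) < m := by exact_mod_cast hm1
    have hamgm : √m * √(m + 1) ≤ m + 1 / 2 := by
      rw [← sqrt_mul hm0.le]
      refine sqrt_le_iff.2 ⟨by positivity, by nlinarith⟩
    rw [Nat.factorial_succ, Nat.cast_mul, Nat.cast_succ,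
      show (m : ℝ) + 1 + 1 / 2 = (m + 1 / 2) + 1 by ring,
      Gamma_add_one (by positivity)]
    calc √π * ((m + 1) * m !) = (m + 1) * (√π * m !) := by ring
      _ ≤ (m + 1) * (2 * √m * Gamma (m + 1 / 2)) :=
          mul_le_mul_of_nonneg_left (ih (by omega)) (by positivity)
      _ = 2 * √(m + 1) * (√m * √(m + 1)) * Gamma (m + 1 / 2) := by
          linear_combination
            (-(2 * √m * Gamma (m + 1 / 2))) * mul_self_sqrt (by positivity : (0 : ℝ) ≤ m + 1)
      _ ≤ 2 * √(m + 1) * (m + 1 / 2) * Gamma (m + 1 / 2) := by gcongr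
      _ = 2 * √(m + 1) * ((m + 1 / 2) * Gamma (m + 1 / 2)) := by ring

theorem factorial_le_exp_one_mul_sqrt_mul_pow {m : ℕ} (hm : m ≠ 0) :
    (m ! : ℝ) ≤ exp 1 * √m * (m / exp 1) ^ m := by
  obtain ⟨k, rfl⟩ := Nat.exists_eq_succ_of_ne_zero hm
  have hseq : Stirling.stirlingSeq (k + 1) ≤ exp 1 / √2 := by
    simpa using Stirling.stirlingSeq'_antitone (Nat.zero_le k)
  rw [Stirling.stirlingSeq, div_le_iff₀ (by positivity)] at hseq
  calc ((k + 1) ! : ℝ) ≤ exp 1 / √2 * (√(2 * (k + 1 : ℕ)) * ((k + 1 : ℕ) / exp 1) ^ (k + 1)) :=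
        hseq
    _ = exp 1 * √(k + 1 : ℕ) * ((k + 1 : ℕ) / exp 1) ^ (k + 1) := by
        rw [sqrt_mul zero_le_two]
        field_simp

theorem two_pi_mul_factorial_mul_pow_le (a b : ℕ) :
    2 * π * √a * √b * (a + b)! * (a ^ a * b ^ b)
      ≤ exp 1 * √(a + b) * a ! * b ! * (a + b) ^ (a + b) := by
  rcases Nat.eq_zero_or_pos a with rfl | ha
  · simp only [Nat.cast_zero, sqrt_zero, mul_zero, zero_mul]
    positivity
  have hlow (m : ℕ) : √(2 * π) * √m * m ^ m ≤ m ! * exp 1 ^ m := by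
    have := Stirling.le_factorial_stirling m
    rwa [sqrt_mul (by positivity), div_pow, mul_div_assoc', div_le_iff₀ (by positivity)] at this
  have hup : ((a + b)! : ℝ) * exp 1 ^ (a + b) ≤ exp 1 * √(a + b) * (a + b) ^ (a + b) := by
    have := factorial_le_exp_one_mul_sqrt_mul_pow (m := a + b) (by omega)
    push_cast at this
    rwa [div_pow, mul_div_assoc', le_div_iff₀ (by positivity)] at this
  have h2π : √(2 * π) * √(2 * π) = 2 * π := mul_self_sqrt (by positivity)
  have key := mul_le_mul (mul_le_mul (hlow a) (hlow b) (by positivity) (by positivity)) hup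
    (by positivity) (by positivity)
  refine le_of_mul_le_mul_right ?_ (pow_pos (exp_pos 1) (a + b))
  rw [pow_add] at key ⊢
  linear_combination key - (√a * √b * (a + b)! * (a ^ a * b ^ b) * exp 1 ^ a * exp 1 ^ b) * h2π

theorem one_le_two_sqrt_mul_ktWeight_zero_left {b : ℕ} (hb : b ≠ 0) :
    1 ≤ 2 * √b * ktWeight 0 b := by
  have h := sqrt_pi_mul_factorial_le_two_sqrt_mul_Gamma_add_half hb
  have hπ : √π * √π = π := mul_self_sqrt pi_pos.le
  rw [ktWeight, Nat.cast_zero, zero_add, zero_add, Gamma_one_half_eq, ← mul_div_assoc,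
    le_div_iff₀ (by positivity), one_mul]
  calc π * b ! = √π * (√π * b !) := by rw [← mul_assoc, hπ]
    _ ≤ √π * (2 * √b * Gamma (b + 1 / 2)) := by gcongr
    _ = 2 * √b * (√π * Gamma (b + 1 / 2)) := by ring

theorem pow_mul_pow_le_two_sqrt_mul_ktWeight_mul_pow {a b : ℕ} (hab : a + b ≠ 0) :
    (a : ℝ) ^ a * b ^ b ≤ 2 * √(a + b) * ktWeight a b * (a + b) ^ (a + b) := by
  rcases Nat.eq_zero_or_pos a with rfl | ha
  · simpa using mul_le_mul_of_nonneg_right (one_le_two_sqrt_mul_ktWeight_zero_left hab)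
      (by positivity : (0 : ℝ) ≤ b ^ b)
  rcases Nat.eq_zero_or_pos b with rfl | hb
  · simpa [ktWeight_comm a 0] using mul_le_mul_of_nonneg_right
      (one_le_two_sqrt_mul_ktWeight_zero_left hab) (by positivity : (0 : ℝ) ≤ a ^ a)
  have hΓa := sqrt_pi_mul_factorial_le_two_sqrt_mul_Gamma_add_half ha.ne'
  have hΓb := sqrt_pi_mul_factorial_le_two_sqrt_mul_Gamma_add_half hb.ne'
  have hπ : √π * √π = π := mul_self_sqrt pi_pos.le
  rw [ktWeight, mul_div_assoc', div_mul_eq_mul_div, le_div_iff₀ (by positivity)]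
  refine le_of_mul_le_mul_left ?_ (by positivity : 0 < 2 * π * √a * √b)
  calc 2 * π * √a * √b * (a ^ a * b ^ b * (π * (a + b)!))
        = π * (2 * π * √a * √b * (a + b)! * (a ^ a * b ^ b)) := by ring
    _ ≤ π * (exp 1 * √(a + b) * a ! * b ! * (a + b) ^ (a + b)) :=
        mul_le_mul_of_nonneg_left (two_pi_mul_factorial_mul_pow_le a b) pi_pos.le
    _ = exp 1 * √(a + b) * (a + b) ^ (a + b) * ((√π * a !) * (√π * b !)) := by
        linear_combination (-(exp 1 * √(a + b) * a ! * b ! * (a + b) ^ (a + b))) * hπ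
    _ ≤ π * √(a + b) * (a + b) ^ (a + b) *
          ((2 * √a * Gamma (a + 1 / 2)) * (2 * √b * Gamma (b + 1 / 2))) := by
        gcongr
        linarith [exp_one_lt_three, pi_gt_three]
    _ = 2 * π * √a * √b *
          (2 * √(a + b) * (Gamma (a + 1 / 2) * Gamma (b + 1 / 2)) * (a + b) ^ (a + b)) := by
        ring

/-- (i) `kt` is a probability distribution on `{0,1}^n`, and
(ii) it uniformly dominates every Bernoulli likelihood up to a factor `2√n`. -/
theorem krichevsky_trofimov (n : ℕ) (hn : 1 ≤ n) :
    (∑ x : Fin n → Bool, kt x = 1) ∧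
    ∀ x : Fin n → Bool, ∀ u ∈ Set.Icc (0 : ℝ) 1,
      u ^ ones x * (1 - u) ^ (n - ones x) ≤ 2 * Real.sqrt n * kt x := by
  refine ⟨sum_kt n, fun x u hu => ?_⟩
  have hsum : ones x + (n - ones x) = n := Nat.add_sub_cancel' (ones_le x)
  have hcast : (ones x : ℝ) + (n - ones x : ℕ) = n := by exact_mod_cast hsum
  have hlik := pow_mul_one_sub_pow_le (ones x) (n - ones x) hu.1 hu.2
  have hkt := pow_mul_pow_le_two_sqrt_mul_ktWeight_mul_pow (a := ones x) (b := n - ones x)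
    (by omega)
  rw [hcast, hsum] at hlik hkt
  rw [kt_eq_ktWeight, ← mul_le_mul_iff_of_pos_left (by positivity : (0 : ℝ) < n ^ n)]
  linarith
end
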